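/- Let 1 ≤ n < d be integers and let q be a positive integer. Let γ ∈ SL_d(ℤ) and let U ∈ GL_n(ℤ/qℤ). Let R' ∈ M_{d×n}(ℤ) be any matrix whose reduction mod q satisfies γ̄·R̄' = (0; U) (the d×n matrix with top (d−n)×n block zero and bottom block U), and let S' ∈ M_{n×d}(ℤ) be any matrix whose reduction mod q equals (0 U^{−1}) (the n×d matrix with left n×(d−n) block zero and right block U^{−1}). Then the real (d+n)×(d+n) matrix n_−(q^{−1}S') · blockdiag(D_q·γ, I_n) · (n_+(q^{−1}R')·D(q))^{−1} has all entries in ℤ and determinant 1, i.e. it lies in SL_{d+n}(ℤ). -/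

import Mathlib

noncomputable section

/-- `n₊(V) = (I_d V; 0 I_n)`, with the `d`-dimensional block indexed by
`Fin (d−n) ⊕ Fin n`. -/
def nPlus (d n : ℕ) (V : Matrix (Fin (d - n) ⊕ Fin n) (Fin n) ℝ) :
    Matrix ((Fin (d - n) ⊕ Fin n) ⊕ Fin n) ((Fin (d - n) ⊕ Fin n) ⊕ Fin n) ℝ :=
  Matrix.fromBlocks 1 V 0 1

/-- `n₋(U) = (I_d 0; U I_n)`. -/
def nMinus (d n : ℕ) (U : Matrix (Fin n) (Fin (d - n) ⊕ Fin n) ℝ) :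
    Matrix ((Fin (d - n) ⊕ Fin n) ⊕ Fin n) ((Fin (d - n) ⊕ Fin n) ⊕ Fin n) ℝ :=
  Matrix.fromBlocks 1 0 U 1

/-- `D(y) = diag(y^{−n/d}·I_d, y·I_n)`. -/
def Dy (d n : ℕ) (y : ℝ) : Matrix ((Fin (d - n) ⊕ Fin n) ⊕ Fin n)
    ((Fin (d - n) ⊕ Fin n) ⊕ Fin n) ℝ :=
  Matrix.fromBlocks
    ((y ^ (-(n : ℝ) / (d : ℝ))) • (1 : Matrix (Fin (d - n) ⊕ Fin n) (Fin (d - n) ⊕ Fin n) ℝ))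
    0 0 (y • (1 : Matrix (Fin n) (Fin n) ℝ))

/-- `D_q = q^{−n/d}·diag(I_{d−n}, q·I_n) ∈ SL_d(ℝ)`. -/
def Dqmat (d n q : ℕ) : Matrix (Fin (d - n) ⊕ Fin n) (Fin (d - n) ⊕ Fin n) ℝ :=
  ((q : ℝ) ^ (-(n : ℝ) / (d : ℝ))) •
    Matrix.fromBlocks (1 : Matrix (Fin (d - n)) (Fin (d - n)) ℝ) 0 0
      ((q : ℝ) • (1 : Matrix (Fin n) (Fin n) ℝ))
/-!
Write `a = q^{-n/d}`, `E = diag(I_{d-n}, q·I_n)` (so that `D_q = a·E`), `V = q⁻¹R'` and `W = q⁻¹S'`.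
Since `(n₊(V)·D(q))⁻¹ = diag(a⁻¹·I_d, q⁻¹·I_n)·n₊(-V)`, the matrix equals `n₋(W)·diag(Eγ, q⁻¹·I_n)·n₊(-V)`.
Its determinant is therefore `det E · q^{-n} = 1`, and its blocks are `Eγ`, `-q⁻¹·EγR'`, `q⁻¹·S'Eγ` and
`q⁻¹·I_n - q⁻²·S'EγR'`. The congruences make all of them integral: the top rows of `γR'` and the left
columns of `S'` vanish mod `q` while `E` multiplies the remaining ones by `q`, and
`S'E(γR') ≡ q·U⁻¹U = q·I_n mod q²`.
-/

open Matrix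

namespace Matrix

section BlockAlgebra

variable {K ι κ : Type*} [Field K] [Fintype ι] [Fintype κ] [DecidableEq ι] [DecidableEq κ]

theorem fromBlocks_lower_mul_diag_mul_inv_upper_mul_diag {a c : K} (ha : a ≠ 0) (hc : c ≠ 0)
    (A : Matrix ι ι K) (V : Matrix ι κ K) (W : Matrix κ ι K) :
    fromBlocks 1 0 W (1 : Matrix κ κ K) * fromBlocks (a • A) 0 0 1 *
        (fromBlocks 1 V 0 1 * fromBlocks (a • 1) 0 0 (c • 1) : Matrix (ι ⊕ κ) (ι ⊕ κ) K)⁻¹ =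
      fromBlocks 1 0 W (1 : Matrix κ κ K) * fromBlocks A 0 0 (c⁻¹ • 1) * fromBlocks 1 (-V) 0 1 := by
  have hinv : (fromBlocks 1 V 0 1 * fromBlocks (a • 1) 0 0 (c • 1) : Matrix (ι ⊕ κ) (ι ⊕ κ) K)⁻¹ =
      fromBlocks (a⁻¹ • 1) 0 0 (c⁻¹ • 1) * fromBlocks 1 (-V) 0 1 := by
    refine inv_eq_right_inv ?_
    simp [fromBlocks_multiply, smul_smul, ha, hc, ← fromBlocks_one]
  rw [hinv]
  simp [fromBlocks_multiply, smul_smul, ha, Matrix.mul_assoc]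

theorem det_fromBlocks_lower_mul_diag_mul_upper (A : Matrix ι ι K) (c : K)
    (V : Matrix ι κ K) (W : Matrix κ ι K) :
    (fromBlocks 1 0 W (1 : Matrix κ κ K) * fromBlocks A 0 0 (c • 1) *
      fromBlocks 1 V 0 (1 : Matrix κ κ K)).det = A.det * c ^ Fintype.card κ := by
  simp

theorem fromBlocks_lower_mul_diag_mul_upper (A : Matrix ι ι K) (c : K)
    (V : Matrix ι κ K) (W : Matrix κ ι K) :
    fromBlocks 1 0 W (1 : Matrix κ κ K) * fromBlocks A 0 0 (c • 1) *
        fromBlocks 1 V 0 (1 : Matrix κ κ K) =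
      fromBlocks A (A * V) (W * A) (c • 1 + W * A * V) := by
  simp [fromBlocks_multiply, Matrix.mul_assoc, add_comm]

end BlockAlgebra

section IntCast

variable {R m n o : Type*}

theorem map_intCast_mul [Ring R] [Fintype n] (X : Matrix m n ℤ) (Y : Matrix n o ℤ) :
    (X * Y).map (Int.cast : ℤ → R) = X.map (Int.cast : ℤ → R) * Y.map (Int.cast : ℤ → R) :=
  Matrix.map_mul (f := Int.castRingHom R)

theorem map_intCast_smul [Ring R] (q : ℤ) (X : Matrix m n ℤ) :
    (q • X).map (Int.cast : ℤ → R) = (q : R) • X.map (Int.cast : ℤ → R) := by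
  ext i j
  simp

theorem map_intCast_eq_inv_smul [DivisionRing R] {q : ℤ} (hq : (q : R) ≠ 0) {X Y : Matrix m n ℤ}
    (h : X = q • Y) : Y.map (Int.cast : ℤ → R) = (q : R)⁻¹ • X.map Int.cast := by
  ext i j
  simp [h, hq]

theorem exists_eq_smul_of_map_intCast_eq_zero {q : ℕ} {X : Matrix m n ℤ}
    (h : X.map (Int.cast : ℤ → ZMod q) = 0) : ∃ Y : Matrix m n ℤ, X = (q : ℤ) • Y := by
  have hdvd (i : m) (j : n) : (q : ℤ) ∣ X i j :=
    (ZMod.intCast_zmod_eq_zero_iff_dvd _ q).1 (congrFun₂ h i j)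
  choose Y hY using hdvd
  exact ⟨of Y, ext hY⟩

end IntCast

section IntegralConjugate

variable {𝕜 ι κ : Type*} [Field 𝕜] [Fintype ι] [Fintype κ] [DecidableEq ι] [DecidableEq κ]

theorem fromBlocks_lower_mul_diag_mul_inv_upper_mul_diag_eq_map_intCast {q : ℤ}
    (hq : (q : 𝕜) ≠ 0) {a : 𝕜} (ha : a ≠ 0) {A : Matrix ι ι ℤ} {V : Matrix ι κ ℤ}
    {W : Matrix κ ι ℤ} {K : Matrix ι κ ℤ} {L : Matrix κ ι ℤ} {Z : Matrix κ κ ℤ}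
    (hK : A * V = q • K) (hL : W * A = q • L) (hZ : q • 1 - W * A * V = (q * q) • Z) :
    fromBlocks 1 0 ((q : 𝕜)⁻¹ • W.map (Int.cast : ℤ → 𝕜)) (1 : Matrix κ κ 𝕜) *
        fromBlocks (a • A.map (Int.cast : ℤ → 𝕜)) 0 0 1 *
        (fromBlocks 1 ((q : 𝕜)⁻¹ • V.map (Int.cast : ℤ → 𝕜)) 0 1 * fromBlocks (a • 1) 0 0 ((q : 𝕜) • 1) :
          Matrix (ι ⊕ κ) (ι ⊕ κ) 𝕜)⁻¹ =
      (fromBlocks A (-K) L Z).map Int.cast := by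
  have hqq : ((q * q : ℤ) : 𝕜) ≠ 0 := by push_cast; exact mul_ne_zero hq hq
  rw [fromBlocks_lower_mul_diag_mul_inv_upper_mul_diag ha hq,
    fromBlocks_lower_mul_diag_mul_upper, fromBlocks_map, Matrix.map_neg _ Int.cast_neg,
    map_intCast_eq_inv_smul hq hK, map_intCast_eq_inv_smul hq hL,
    map_intCast_eq_inv_smul hqq hZ]
  simp only [Matrix.map_sub _ Int.cast_sub, Matrix.map_intCast_smul,
    Matrix.map_one _ Int.cast_zero Int.cast_one, map_intCast_mul, Matrix.smul_mul, Matrix.mul_smul,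
    Matrix.mul_neg, smul_smul, Int.cast_mul]
  congr 1
  rw [mul_inv, smul_sub, smul_smul, mul_assoc, inv_mul_cancel₀ hq, mul_one, sub_eq_add_neg]

end IntegralConjugate

end Matrix

section ScaleSnd

variable {R ι κ m : Type*} [CommRing R] [DecidableEq ι] [DecidableEq κ]

def scaleSnd (q : R) : Matrix (ι ⊕ κ) (ι ⊕ κ) R :=
  fromBlocks 1 0 0 (q • 1)

theorem scaleSnd_mul_fromRows [Fintype ι] [Fintype κ] (q : R) (A : Matrix ι m R)
    (B : Matrix κ m R) :
    (scaleSnd q : Matrix (ι ⊕ κ) (ι ⊕ κ) R) * fromRows A B = fromRows A (q • B) := by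
  rw [scaleSnd, fromBlocks_mul_fromRows]
  simp

theorem fromCols_mul_scaleSnd [Fintype ι] [Fintype κ] (q : R) (A : Matrix m ι R)
    (B : Matrix m κ R) :
    fromCols A B * (scaleSnd q : Matrix (ι ⊕ κ) (ι ⊕ κ) R) = fromCols A (q • B) := by
  rw [scaleSnd, fromCols_mul_fromBlocks]
  simp

theorem map_intCast_scaleSnd (q : ℤ) :
    (scaleSnd q : Matrix (ι ⊕ κ) (ι ⊕ κ) ℤ).map (Int.cast : ℤ → R) = scaleSnd (q : R) := by
  rw [scaleSnd, scaleSnd, fromBlocks_map, Matrix.map_intCast_smul]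
  simp [Matrix.map_one, Matrix.map_zero]

theorem det_scaleSnd [Fintype ι] [Fintype κ] (q : R) :
    (scaleSnd q : Matrix (ι ⊕ κ) (ι ⊕ κ) R).det = q ^ Fintype.card κ := by
  simp [scaleSnd]

end ScaleSnd

section Congruences

variable {ι κ m : Type*} [Fintype ι] [Fintype κ] [DecidableEq ι] [DecidableEq κ] {q : ℕ}

theorem exists_scaleSnd_mul_eq_smul {P : Matrix (ι ⊕ κ) m ℤ} {U : Matrix κ m (ZMod q)}
    (hP : P.map Int.cast = fromRows 0 U) :
    ∃ K, (scaleSnd (q : ℤ) : Matrix (ι ⊕ κ) (ι ⊕ κ) ℤ) * P = (q : ℤ) • K := by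
  obtain ⟨P₁, P₂, rfl⟩ : ∃ P₁ P₂, P = fromRows P₁ P₂ := ⟨_, _, (fromRows_toRows P).symm⟩
  rw [fromRows_map, fromRows_inj.eq_iff] at hP
  obtain ⟨Y, rfl⟩ := exists_eq_smul_of_map_intCast_eq_zero hP.1
  refine ⟨fromRows Y P₂, ?_⟩
  rw [scaleSnd_mul_fromRows]
  ext (i | i) j <;> simp

theorem exists_mul_scaleSnd_eq_smul {S : Matrix m (ι ⊕ κ) ℤ} {V : Matrix m κ (ZMod q)}
    (hS : S.map Int.cast = fromCols 0 V) :
    ∃ L, S * (scaleSnd (q : ℤ) : Matrix (ι ⊕ κ) (ι ⊕ κ) ℤ) = (q : ℤ) • L := by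
  obtain ⟨S₁, S₂, rfl⟩ : ∃ S₁ S₂, S = fromCols S₁ S₂ := ⟨_, _, (fromCols_toCols S).symm⟩
  rw [fromCols_map, fromCols_inj.eq_iff] at hS
  obtain ⟨X, rfl⟩ := exists_eq_smul_of_map_intCast_eq_zero hS.1
  refine ⟨fromCols X S₂, ?_⟩
  rw [fromCols_mul_scaleSnd]
  ext i (j | j) <;> simp

theorem exists_smul_one_sub_mul_scaleSnd_mul_eq_smul {P : Matrix (ι ⊕ κ) κ ℤ}
    {S : Matrix κ (ι ⊕ κ) ℤ} {U V : Matrix κ κ (ZMod q)}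
    (hP : P.map Int.cast = fromRows 0 U) (hS : S.map Int.cast = fromCols 0 V) (hVU : V * U = 1) :
    ∃ Z, (q : ℤ) • 1 - S * (scaleSnd (q : ℤ) : Matrix (ι ⊕ κ) (ι ⊕ κ) ℤ) * P =
      ((q : ℤ) * q) • Z := by
  obtain ⟨P₁, P₂, rfl⟩ : ∃ P₁ P₂, P = fromRows P₁ P₂ := ⟨_, _, (fromRows_toRows P).symm⟩
  obtain ⟨S₁, S₂, rfl⟩ : ∃ S₁ S₂, S = fromCols S₁ S₂ := ⟨_, _, (fromCols_toCols S).symm⟩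
  rw [fromRows_map, fromRows_inj.eq_iff] at hP
  rw [fromCols_map, fromCols_inj.eq_iff] at hS
  obtain ⟨Y, rfl⟩ := exists_eq_smul_of_map_intCast_eq_zero hP.1
  obtain ⟨X, rfl⟩ := exists_eq_smul_of_map_intCast_eq_zero hS.1
  have hSP : (1 - S₂ * P₂).map (Int.cast : ℤ → ZMod q) = 0 := by
    rw [Matrix.map_sub _ Int.cast_sub, map_intCast_mul, hP.2, hS.2, hVU,
      Matrix.map_one _ Int.cast_zero Int.cast_one, sub_self]
  obtain ⟨T, hT⟩ := exists_eq_smul_of_map_intCast_eq_zero hSP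
  refine ⟨T - X * Y, ?_⟩
  rw [fromCols_mul_scaleSnd, fromCols_mul_fromRows, smul_sub, ← smul_smul, ← hT]
  simp only [Matrix.smul_mul, Matrix.mul_smul, smul_smul]
  module

end Congruences

theorem matrix_relation_general (d n q : ℕ) (hq : 0 < q)
    (γ : Matrix.SpecialLinearGroup (Fin (d - n) ⊕ Fin n) ℤ)
    (U : (Matrix (Fin n) (Fin n) (ZMod q))ˣ)
    (R' : Matrix (Fin (d - n) ⊕ Fin n) (Fin n) ℤ)
    (hR' : (γ.val.map (Int.cast : ℤ → ZMod q)) * (R'.map (Int.cast : ℤ → ZMod q)) =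
      Matrix.fromRows (0 : Matrix (Fin (d - n)) (Fin n) (ZMod q))
        (U : Matrix (Fin n) (Fin n) (ZMod q)))
    (S' : Matrix (Fin n) (Fin (d - n) ⊕ Fin n) ℤ)
    (hS' : S'.map (Int.cast : ℤ → ZMod q) =
      Matrix.fromCols (0 : Matrix (Fin n) (Fin (d - n)) (ZMod q))
        ((U⁻¹ : (Matrix (Fin n) (Fin n) (ZMod q))ˣ) : Matrix (Fin n) (Fin n) (ZMod q))) :
    (∀ i j,
      ∃ m : ℤ,
        (nMinus d n (((q : ℝ)⁻¹) • S'.map (Int.cast : ℤ → ℝ)) *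
          Matrix.fromBlocks (Dqmat d n q * γ.val.map (Int.cast : ℤ → ℝ)) 0 0
            (1 : Matrix (Fin n) (Fin n) ℝ) *
          (nPlus d n (((q : ℝ)⁻¹) • R'.map (Int.cast : ℤ → ℝ)) * Dy d n (q : ℝ))⁻¹) i j
          = (m : ℝ)) ∧
    (nMinus d n (((q : ℝ)⁻¹) • S'.map (Int.cast : ℤ → ℝ)) *
      Matrix.fromBlocks (Dqmat d n q * γ.val.map (Int.cast : ℤ → ℝ)) 0 0
        (1 : Matrix (Fin n) (Fin n) ℝ) *
      (nPlus d n (((q : ℝ)⁻¹) • R'.map (Int.cast : ℤ → ℝ)) * Dy d n (q : ℝ))⁻¹).det = 1 := by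
  set E : Matrix (Fin (d - n) ⊕ Fin n) (Fin (d - n) ⊕ Fin n) ℤ := scaleSnd (q : ℤ)
  have hq₀ : ((q : ℤ) : ℝ) ≠ 0 := by exact_mod_cast hq.ne'
  have ha : (q : ℝ) ^ (-(n : ℝ) / d) ≠ 0 := (Real.rpow_pos_of_pos (by exact_mod_cast hq) _).ne'
  have hP : (γ.val * R').map (Int.cast : ℤ → ZMod q) = fromRows 0 U := by
    rwa [Matrix.map_intCast_mul]
  obtain ⟨K, hK⟩ := exists_scaleSnd_mul_eq_smul hP
  obtain ⟨L, hL⟩ := exists_mul_scaleSnd_eq_smul hS'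
  obtain ⟨Z, hZ⟩ := exists_smul_one_sub_mul_scaleSnd_mul_eq_smul hP hS' U.inv_mul
  have hDγ : Dqmat d n q * γ.val.map Int.cast =
      (q : ℝ) ^ (-(n : ℝ) / d) • (E * γ.val).map (Int.cast : ℤ → ℝ) := by
    rw [Matrix.map_intCast_mul, map_intCast_scaleSnd, Int.cast_natCast, ← Matrix.smul_mul]
    rfl
  have hM := fromBlocks_lower_mul_diag_mul_inv_upper_mul_diag_eq_map_intCast hq₀ ha
    (A := E * γ.val) (V := R') (W := S') (by rw [Matrix.mul_assoc, hK])
    (by rw [← Matrix.mul_assoc, hL, Matrix.smul_mul]) (by simpa only [Matrix.mul_assoc] using hZ)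
  rw [Int.cast_natCast] at hM hq₀
  unfold nMinus nPlus Dy
  rw [hDγ]
  constructor
  · rw [hM]
    exact fun i j => ⟨_, rfl⟩
  · rw [fromBlocks_lower_mul_diag_mul_inv_upper_mul_diag ha hq₀,
      det_fromBlocks_lower_mul_diag_mul_upper, ← Int.cast_det, det_mul, det_scaleSnd, γ.prop]
    simp [hq.ne']

/-- If `γ·R' ≡ (0; U)` and `S' ≡ (0 U⁻¹) mod q`, then
`n₋(q⁻¹S')·blockdiag(D_q·γ, I_n)·(n₊(q⁻¹R')·D(q))⁻¹ ∈ SL_{d+n}(ℤ)`. -/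
theorem matrix_relation (d n q : ℕ) (hn : 1 ≤ n) (hnd : n < d) (hq : 0 < q)
    (γ : Matrix.SpecialLinearGroup (Fin (d - n) ⊕ Fin n) ℤ)
    (U : (Matrix (Fin n) (Fin n) (ZMod q))ˣ)
    (R' : Matrix (Fin (d - n) ⊕ Fin n) (Fin n) ℤ)
    (hR' : (γ.val.map (Int.cast : ℤ → ZMod q)) * (R'.map (Int.cast : ℤ → ZMod q)) =
      Matrix.fromRows (0 : Matrix (Fin (d - n)) (Fin n) (ZMod q))
        (U : Matrix (Fin n) (Fin n) (ZMod q)))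
    (S' : Matrix (Fin n) (Fin (d - n) ⊕ Fin n) ℤ)
    (hS' : S'.map (Int.cast : ℤ → ZMod q) =
      Matrix.fromCols (0 : Matrix (Fin n) (Fin (d - n)) (ZMod q))
        ((U⁻¹ : (Matrix (Fin n) (Fin n) (ZMod q))ˣ) : Matrix (Fin n) (Fin n) (ZMod q))) :
    (∀ i j,
      ∃ m : ℤ,
        (nMinus d n (((q : ℝ)⁻¹) • S'.map (Int.cast : ℤ → ℝ)) *
          Matrix.fromBlocks (Dqmat d n q * γ.val.map (Int.cast : ℤ → ℝ)) 0 0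
            (1 : Matrix (Fin n) (Fin n) ℝ) *
          (nPlus d n (((q : ℝ)⁻¹) • R'.map (Int.cast : ℤ → ℝ)) * Dy d n (q : ℝ))⁻¹) i j
          = (m : ℝ)) ∧
    (nMinus d n (((q : ℝ)⁻¹) • S'.map (Int.cast : ℤ → ℝ)) *
      Matrix.fromBlocks (Dqmat d n q * γ.val.map (Int.cast : ℤ → ℝ)) 0 0
        (1 : Matrix (Fin n) (Fin n) ℝ) *
      (nPlus d n (((q : ℝ)⁻¹) • R'.map (Int.cast : ℤ → ℝ)) * Dy d n (q : ℝ))⁻¹).det = 1 :=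
  matrix_relation_general d n q hq γ U R' hR' S' hS'

end
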